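/- arXiv:1310.1318 — 3 statements merged into one kernel-verified Lean document; each statement's English description precedes it below -/
import Mathlib

section
/- Let (I, ≤) be a directed preorder and (X_i, f_{ji}) a regular directed system of topological spaces over (I, ≤), i.e. every transition map f_{ji} is an injective, continuous, open map. Then each canonical map f_{*i} : X_i → X_∞ into the direct limit is an open map; consequently f_{*i} is an open embedding (a homeomorphism onto an open subset of X_∞). -/
universe u v

/-- A directed system of topological spaces over a preorder `I`:
spaces `X i` with continuous transition maps `map i j : X i → X j` for `i ≤ j`,
satisfying the identity and composition laws. -/
structure TopDirectedSystem (I : Type u) [Preorder I] : Type (max u (v + 1)) where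
  X : I → Type v
  top : ∀ i, TopologicalSpace (X i)
  map : ∀ i j, i ≤ j → X i → X j
  map_continuous : ∀ i j (h : i ≤ j), Continuous (map i j h)
  map_id : ∀ i (x : X i), map i i le_rfl x = x
  map_comp : ∀ i j k (hij : i ≤ j) (hjk : j ≤ k) (x : X i),
    map j k hjk (map i j hij x) = map i k (hij.trans hjk) x

attribute [instance] TopDirectedSystem.top

namespace TopDirectedSystem

variable {I : Type u} [Preorder I] (S : TopDirectedSystem.{u, v} I)

/-- The relation on the disjoint union: `⟨i, x⟩ ∼ ⟨j, y⟩` iff there is `k ≥ i, j`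
with `f_{ki} x = f_{kj} y`. -/
def Rel (p q : Σ i, S.X i) : Prop :=
  ∃ (k : I) (hik : p.1 ≤ k) (hjk : q.1 ≤ k), S.map p.1 k hik p.2 = S.map q.1 k hjk q.2

/-- The direct limit: the quotient of the disjoint union (with the disjoint union
topology) by `Rel`, carrying the quotient topology. -/
def Limit : Type (max u v) := Quot S.Rel

instance : TopologicalSpace S.Limit :=
  inferInstanceAs (TopologicalSpace (Quot S.Rel))

/-- The canonical map `f_{*i} : X i → X_∞`. -/
def ι (i : I) (x : S.X i) : S.Limit :=
  Quot.mk S.Rel ⟨i, x⟩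

/-- A directed system is regular if all transition maps are injective
(continuous) open maps. -/
def Regular : Prop :=
  ∀ i j (h : i ≤ j), Function.Injective (S.map i j h) ∧ IsOpenMap (S.map i j h)

end TopDirectedSystem

/-! The preimage of `f_{*i}(U)` in `X_j` is `⋃_{k ≥ i, j} f_{kj}⁻¹(f_{ki}(U))`, which is open when
the transition maps are open; and `f_{*i} x = f_{*i} y` means `f_{ki} x = f_{ki} y` for some
`k ≥ i`, so injective transition maps make `f_{*i}` injective. -/

namespace TopDirectedSystem

variable {I : Type u} [Preorder I] (S : TopDirectedSystem.{u, v} I)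

theorem continuous_ι (i : I) : Continuous (S.ι i) :=
  continuous_quot_mk.comp continuous_sigmaMk

theorem isOpen_limit_iff {V : Set S.Limit} : IsOpen V ↔ ∀ j, IsOpen (S.ι j ⁻¹' V) :=
  isOpen_sigma_iff

section Directed

variable [IsDirected I (· ≤ ·)]

theorem equivalence_rel : Equivalence S.Rel where
  refl p := ⟨p.1, le_rfl, le_rfl, rfl⟩
  symm := fun ⟨k, hik, hjk, h⟩ => ⟨k, hjk, hik, h.symm⟩
  trans := by
    rintro p q r ⟨k, hpk, hqk, h⟩ ⟨k', hqk', hrk', h'⟩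
    obtain ⟨m, hkm, hk'm⟩ := directed_of (· ≤ ·) k k'
    refine ⟨m, hpk.trans hkm, hrk'.trans hk'm, ?_⟩
    calc S.map p.1 m (hpk.trans hkm) p.2
        = S.map k m hkm (S.map q.1 k hqk q.2) := by rw [← h, S.map_comp]
      _ = S.map k' m hk'm (S.map q.1 k' hqk' q.2) := by rw [S.map_comp, S.map_comp]
      _ = S.map r.1 m (hrk'.trans hk'm) r.2 := by rw [h', S.map_comp]

theorem ι_eq_ι_iff {i j : I} {x : S.X i} {y : S.X j} :
    S.ι i x = S.ι j y ↔ ∃ (k : I) (hik : i ≤ k) (hjk : j ≤ k), S.map i k hik x = S.map j k hjk y :=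
  (Quot.eq.trans S.equivalence_rel.eqvGen_iff :)

theorem preimage_ι_image_ι (i j : I) (U : Set (S.X i)) :
    S.ι j ⁻¹' (S.ι i '' U) = ⋃ (k : I) (hjk : j ≤ k) (hik : i ≤ k),
      S.map j k hjk ⁻¹' (S.map i k hik '' U) := by
  ext y
  simp only [Set.mem_preimage, Set.mem_image, Set.mem_iUnion, ι_eq_ι_iff]
  constructor
  · rintro ⟨x, hx, k, hik, hjk, h⟩
    exact ⟨k, hjk, hik, x, hx, h⟩
  · rintro ⟨k, hjk, hik, x, hx, h⟩
    exact ⟨x, hx, k, hik, hjk, h⟩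

theorem ι_injective (hinj : ∀ i j (h : i ≤ j), Function.Injective (S.map i j h)) (i : I) :
    Function.Injective (S.ι i) := fun x y hxy => by
  obtain ⟨k, hik, _, h⟩ := S.ι_eq_ι_iff.mp hxy
  exact hinj i k hik h

theorem isOpenMap_ι (hopen : ∀ i j (h : i ≤ j), IsOpenMap (S.map i j h)) (i : I) :
    IsOpenMap (S.ι i) := fun U hU => by
  rw [isOpen_limit_iff]
  intro j
  rw [preimage_ι_image_ι]
  exact isOpen_iUnion fun k => isOpen_iUnion fun hjk => isOpen_iUnion fun hik =>
    (hopen i k hik U hU).preimage (S.map_continuous j k hjk)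

end Directed

end TopDirectedSystem

open Topology

theorem iota_isOpenMap_isOpenEmbedding_general {I : Type u} [Preorder I] [IsDirected I (· ≤ ·)]
    (S : TopDirectedSystem.{u, v} I) (hreg : S.Regular) (i : I) :
    IsOpenMap (S.ι i) ∧ IsOpenEmbedding (S.ι i) := by
  have hopen := S.isOpenMap_ι (fun i j h => (hreg i j h).2) i
  exact ⟨hopen, .of_continuous_injective_isOpenMap (S.continuous_ι i)
    (S.ι_injective (fun i j h => (hreg i j h).1) i) hopen⟩

/-- for a regular directed system, each canonical map
`f_{*i} : X i → X_∞` is an open map; consequently it is an open embedding. -/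
theorem iota_isOpenMap_isOpenEmbedding {I : Type u} [Preorder I] [Nonempty I] [IsDirected I (· ≤ ·)]
    (S : TopDirectedSystem.{u, v} I) (hreg : S.Regular) (i : I) :
    IsOpenMap (S.ι i) ∧ IsOpenEmbedding (S.ι i) :=
  iota_isOpenMap_isOpenEmbedding_general S hreg i
end

section
/- Let (I, ≤) be a directed preorder and (X_i, f_{ji}) a regular directed system of topological spaces over (I, ≤). If every X_i is a T₂ (Hausdorff) space, then the direct limit X_∞ is a T₂ space. -/
universe u v

namespace TopDirectedSystem

variable {I : Type u} [Preorder I] [IsDirected I (· ≤ ·)] (S : TopDirectedSystem.{u, v} I)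

lemma rel_equivalence : Equivalence S.Rel := by
  constructor
  · intro p; exact ⟨p.1, le_rfl, le_rfl, rfl⟩
  · rintro p q ⟨k, h1, h2, e⟩; exact ⟨k, h2, h1, e.symm⟩
  · rintro p q r ⟨k1, h1, h2, e1⟩ ⟨k2, h3, h4, e2⟩
    obtain ⟨k, hk1, hk2⟩ := directed_of (· ≤ ·) k1 k2
    refine ⟨k, h1.trans hk1, h4.trans hk2, ?_⟩
    have e1' := congrArg (S.map k1 k hk1) e1
    have e2' := congrArg (S.map k2 k hk2) e2
    rw [S.map_comp, S.map_comp] at e1'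
    rw [S.map_comp, S.map_comp] at e2'
    exact e1'.trans e2'

lemma mk_eq_iff_rel {p q : Σ i, S.X i} :
    Quot.mk S.Rel p = Quot.mk S.Rel q ↔ S.Rel p q := by
  rw [Quot.eq]
  exact (Equivalence.eqvGen_iff (S.rel_equivalence))

lemma ι_map (i k : I) (hik : i ≤ k) (x : S.X i) :
    S.ι k (S.map i k hik x) = S.ι i x := by
  refine Quot.sound ⟨k, le_rfl, hik, ?_⟩
  exact S.map_id k _

lemma ι_inj (hreg : S.Regular) (k : I) : Function.Injective (S.ι k) := by
  intro x y hxy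
  obtain ⟨l, h1, h2, e⟩ := (S.mk_eq_iff_rel).1 hxy
  exact (hreg k l h1).1 (e.trans (by rfl))

lemma ι_isOpenMap (hreg : S.Regular) (k : I) : IsOpenMap (S.ι k) := by
  intro U hU
  have : IsOpen (Quot.mk S.Rel ⁻¹' (S.ι k '' U)) := by
    rw [isOpen_sigma_iff]
    intro j
    rw [isOpen_iff_forall_mem_open]
    rintro y hy
    obtain ⟨x, hxU, hxe⟩ := hy
    obtain ⟨l, hkl, hjl, e⟩ := (S.mk_eq_iff_rel).1 hxe
    refine ⟨S.map j l hjl ⁻¹' (S.map k l hkl '' U), ?_, ?_, ?_⟩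
    · rintro z hz
      obtain ⟨w, hwU, hwe⟩ := hz
      refine ⟨w, hwU, ?_⟩
      show Quot.mk S.Rel ⟨k, w⟩ = Quot.mk S.Rel ⟨j, z⟩
      exact (S.mk_eq_iff_rel).2 ⟨l, hkl, hjl, hwe⟩
    · exact (S.map_continuous j l hjl).isOpen_preimage _ ((hreg k l hkl).2 U hU)
    · exact ⟨x, hxU, e⟩
  exact this

end TopDirectedSystem

/-- the direct limit of a regular directed system of T2Space
topological spaces is a T2Space. -/
theorem limit_t2 {I : Type u} [Preorder I] [Nonempty I] [IsDirected I (· ≤ ·)]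
    (S : TopDirectedSystem.{u, v} I) (hreg : S.Regular) (h : ∀ i, T2Space (S.X i)) :
    T2Space S.Limit := by
  constructor
  intro a b hab
  obtain ⟨⟨i, x⟩, rfl⟩ := Quot.exists_rep a
  obtain ⟨⟨j, y⟩, rfl⟩ := Quot.exists_rep b
  obtain ⟨k, hik, hjk⟩ := directed_of (· ≤ ·) i j
  have hx : Quot.mk S.Rel ⟨i, x⟩ = S.ι k (S.map i k hik x) := (S.ι_map i k hik x).symm
  have hy : Quot.mk S.Rel ⟨j, y⟩ = S.ι k (S.map j k hjk y) := (S.ι_map j k hjk y).symm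
  rw [hx, hy] at hab ⊢
  set x' := S.map i k hik x
  set y' := S.map j k hjk y
  have hxy : x' ≠ y' := fun e => hab (congrArg _ e)
  obtain ⟨U, V, hU, hV, hxU, hyV, hUV⟩ := t2_separation hxy
  refine ⟨S.ι k '' U, S.ι k '' V, S.ι_isOpenMap hreg k U hU, S.ι_isOpenMap hreg k V hV,
    ⟨x', hxU, rfl⟩, ⟨y', hyV, rfl⟩, ?_⟩
  rw [Set.disjoint_left]
  rintro _ ⟨u, huU, rfl⟩ ⟨v, hvV, he⟩
  have : v = u := S.ι_inj hreg k he
  exact hUV.le_bot ⟨huU, this ▸ hvV⟩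
end

section
/- Let (I, ≤) be a directed preorder and (X_i, f_{ji}) a regular directed system of topological spaces over (I, ≤). Suppose the system is physical: there is a topological space Σ and a family of injective, continuous, open maps h_i : X_i → Σ × ℝ satisfying h_j ∘ f_{ji} = h_i whenever i ≤ j. Then there exists an injective, continuous, open map h_* : X_∞ → Σ × ℝ from the direct limit with h_* ∘ f_{*i} = h_i for all i; in particular, if Σ is second countable then X_∞ is second countable. -/
universe u v

open TopologicalSpace in
/-- a physical regular directed system (one admitting compatible
injective continuous open maps `h i : X i → Σ × ℝ`) admits an injective continuous
open map `h_* : X_∞ → Σ × ℝ` with `h_* ∘ f_{*i} = h i`; in particular if `Σ` is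
second countable then so is the direct limit. -/
theorem physical_limit_map {I : Type u} [Preorder I] [Nonempty I]
    [IsDirected I (· ≤ ·)] (S : TopDirectedSystem.{u, v} I) (hreg : S.Regular)
    (B : Type) [TopologicalSpace B] (h : ∀ i, S.X i → B × ℝ)
    (hinj : ∀ i, Function.Injective (h i)) (hcont : ∀ i, Continuous (h i))
    (hopen : ∀ i, IsOpenMap (h i))
    (hcomm : ∀ i j (hij : i ≤ j) (x : S.X i), h j (S.map i j hij x) = h i x) :
    ∃ H : S.Limit → B × ℝ, Function.Injective H ∧ Continuous H ∧ IsOpenMap H ∧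
      (∀ i (x : S.X i), H (S.ι i x) = h i x) ∧
      (SecondCountableTopology B → SecondCountableTopology S.Limit) := by
  have hrel : ∀ p q : Σ i, S.X i, S.Rel p q → h p.1 p.2 = h q.1 q.2 := by
    rintro ⟨i, x⟩ ⟨j, y⟩ ⟨k, hik, hjk, he⟩
    calc h i x = h k (S.map i k hik x) := (hcomm i k hik x).symm
      _ = h k (S.map j k hjk y) := by rw [he]
      _ = h j y := hcomm j k hjk y
  set H : S.Limit → B × ℝ := Quot.lift (fun p => h p.1 p.2) hrel with hH
  have hsurj : Function.Surjective (Quot.mk S.Rel) := Quot.exists_rep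
  have Hinj : Function.Injective H := by
    intro a b
    induction a using Quot.ind with | _ p =>
    induction b using Quot.ind with | _ q =>
    obtain ⟨i, x⟩ := p
    obtain ⟨j, y⟩ := q
    intro he
    obtain ⟨k, hik, hjk⟩ := directed_of (· ≤ ·) i j
    refine Quot.sound ⟨k, hik, hjk, hinj k ?_⟩
    rw [hcomm i k hik x, hcomm j k hjk y]
    exact he
  have Hcont : Continuous H := by
    rw [hH]
    refine continuous_quot_lift _ ?_
    exact continuous_sigma fun i => hcont i
  have Hopen : IsOpenMap H := by
    intro U hU
    have h1 : IsOpen (Quot.mk S.Rel ⁻¹' U) := hU.preimage continuous_quot_mk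
    have h2 : H '' U = ⋃ i, h i '' (Sigma.mk i ⁻¹' (Quot.mk S.Rel ⁻¹' U)) := by
      ext z
      constructor
      · rintro ⟨u, hu, rfl⟩
        obtain ⟨⟨i, x⟩, rfl⟩ := hsurj u
        exact Set.mem_iUnion.2 ⟨i, x, hu, rfl⟩
      · rintro ⟨_, ⟨i, rfl⟩, x, hx, rfl⟩
        exact ⟨Quot.mk _ ⟨i, x⟩, hx, rfl⟩
    rw [h2]
    exact isOpen_iUnion fun i => (hopen i) _ ((isOpen_sigma_iff.1 h1) i)
  refine ⟨H, Hinj, Hcont, Hopen, fun i x => rfl, fun hB => ?_⟩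
  have : SecondCountableTopology (B × ℝ) := inferInstance
  exact (Topology.IsOpenEmbedding.of_continuous_injective_isOpenMap Hcont Hinj Hopen).toIsEmbedding.secondCountableTopology
end
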